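/- arXiv:2403.00583 — 2 statements merged into one kernel-verified Lean document; each statement's English description precedes it below -/
import Mathlib

section
/- Let G be a finite group, π a set of primes, and q ∈ π a prime. Then the q-part of |S_q(G_π)| equals the q-part of the order of the hypercentre of G, where S_q(G_π) is the set of π-elements of G whose conjugacy class size is a power of q. -/
/-!
Induct on `|G|`. Let `N ≤ Z(G)` and let `K / N` be the centralizer of `gN` in `G / N`. Then
`h ↦ [g, h]` is a homomorphism `K → N` with kernel `C_G(g)`, so `|K : C_G(g)|` divides `|N|`.

If `q ∣ |Z(G)|`, take `|N| = q`. Then `|g^G|` is a power of `q` iff `|(gN)^{G/N}|` is, and `g`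
is a π-element iff `gN` is, so `S_q(G_π)` is the full preimage of `S_q((G/N)_π)`; so is `Z_∞(G)`
of `Z_∞(G/N)`. Both orders are multiplied by `q`.

If `q ∤ |Z(G)|`, a Sylow `q`-subgroup acting by conjugation on `S_q(G_π)` fixes exactly the
central π-elements, a subgroup of `Z(G)`; hence `q ∤ |S_q(G_π)|`. Also `q ∤ |Z_∞(G)|`: otherwise,
by induction, `Z(G/Z(G))` contains some `gZ(G)` of order `q`, and then `y = g^{|Z(G)|}` has order
`q` modulo `Z(G)` while `y^q = 1`; the commutators `[h, y] ∈ Z(G)` then have order dividing both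
`q` and `|Z(G)|`, so `y` is central, a contradiction.
-/

/-- A π-element: every prime dividing its order lies in π. -/
def IsPiElement {G : Type*} [Group G] (π : Set ℕ) (g : G) : Prop :=
  ∀ p : ℕ, p.Prime → p ∣ orderOf g → p ∈ π

section

open Subgroup QuotientGroup

variable {G : Type*} [Group G]

section PiElements

variable {π : Set ℕ}

lemma isPiElement_one : IsPiElement π (1 : G) := by
  intro p hp hdvd
  rw [orderOf_one, Nat.dvd_one] at hdvd
  exact absurd hdvd hp.ne_one

lemma IsPiElement.of_orderOf_dvd {H : Type*} [Group H] {g : G} {h : H}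
    (hg : IsPiElement π g) (hhg : orderOf h ∣ orderOf g) : IsPiElement π h :=
  fun p hp hdvd => hg p hp (hdvd.trans hhg)

lemma IsPiElement.inv {g : G} (hg : IsPiElement π g) : IsPiElement π g⁻¹ :=
  hg.of_orderOf_dvd (orderOf_inv g).dvd

lemma IsPiElement.mul_of_commute {g h : G} (hgh : Commute g h) (hg : IsPiElement π g)
    (hh : IsPiElement π h) : IsPiElement π (g * h) := by
  intro p hp hdvd
  rcases hp.dvd_mul.mp (hdvd.trans hgh.orderOf_mul_dvd_mul_orderOf) with hpg | hph
  exacts [hg p hp hpg, hh p hp hph]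

variable (π G) in
def centralPiSubgroup : Subgroup G where
  carrier := {g | g ∈ center G ∧ IsPiElement π g}
  one_mem' := ⟨one_mem _, isPiElement_one⟩
  mul_mem' := fun {a _} ⟨ha, ha'⟩ ⟨hb, hb'⟩ =>
    ⟨mul_mem ha hb, ha'.mul_of_commute (mem_center_iff.mp hb a) hb'⟩
  inv_mem' := fun ⟨ha, ha'⟩ => ⟨inv_mem ha, ha'.inv⟩

lemma isPiElement_mk_iff {q : ℕ} [Fact q.Prime] (hqπ : q ∈ π) {N : Subgroup G} [N.Normal]
    (hN : IsPGroup q N) {g : G} : IsPiElement π (g : G ⧸ N) ↔ IsPiElement π g := by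
  refine ⟨fun hgN p hp hpg => ?_, fun hg => hg.of_orderOf_dvd (orderOf_map_dvd (mk' N) g)⟩
  have hmem : g ^ orderOf (g : G ⧸ N) ∈ N := by
    rw [← QuotientGroup.eq_one_iff, QuotientGroup.mk_pow, pow_orderOf_eq_one]
  obtain ⟨k, hk⟩ := hN ⟨_, hmem⟩
  have hdvd : orderOf g ∣ orderOf (g : G ⧸ N) * q ^ k := by
    apply orderOf_dvd_of_pow_eq_one
    rw [pow_mul]
    simpa using congrArg Subtype.val hk
  rcases hp.dvd_mul.mp (hpg.trans hdvd) with hp' | hp'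
  · exact hgN p hp hp'
  · rwa [(Nat.prime_dvd_prime_iff_eq hp Fact.out).mp (hp.dvd_of_dvd_pow hp')]

end PiElements

lemma normal_of_le_center {N : Subgroup G} (hN : N ≤ center G) : N.Normal :=
  ⟨fun n hn g => by rwa [mem_center_iff.mp (hN hn) g, mul_inv_cancel_right]⟩

section CentralQuotient

variable {N : Subgroup G} [N.Normal]

lemma mul_mul_inv_mul_inv_mem_of_mem_comap {g h : G}
    (hh : h ∈ (centralizer {(g : G ⧸ N)}).comap (mk' N)) : g * h * g⁻¹ * h⁻¹ ∈ N := by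
  have hgh : (h : G ⧸ N) * g = g * h := mem_centralizer_singleton_iff.mp (mem_comap.mp hh)
  rw [← QuotientGroup.eq_one_iff]
  simp only [QuotientGroup.mk_mul, QuotientGroup.mk_inv, ← hgh]
  group

lemma index_centralizer_eq_relIndex_mul (g : G) :
    (centralizer {g}).index = (centralizer {g}).relIndex
      ((centralizer {(g : G ⧸ N)}).comap (mk' N)) * (centralizer {(g : G ⧸ N)}).index := by
  rw [← index_comap_of_surjective _ (mk'_surjective N), relIndex_mul_index]
  intro x hx
  rw [mem_comap, mem_centralizer_singleton_iff]
  simp only [mk'_apply, ← QuotientGroup.mk_mul, mem_centralizer_singleton_iff.mp hx]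

variable (hN : N ≤ center G)
include hN

-- Multiplicative because its values lie in the central subgroup `N`; its kernel is `C_G(g)`.
def commutatorHom (g : G) : (centralizer {(g : G ⧸ N)}).comap (mk' N) →* N where
  toFun h := ⟨g * h * g⁻¹ * h⁻¹, mul_mul_inv_mul_inv_mem_of_mem_comap h.2⟩
  map_one' := by ext; simp
  map_mul' := by
    rintro ⟨x, hx⟩ ⟨y, hy⟩
    ext
    have hc := mem_center_iff.mp (hN (mul_mul_inv_mul_inv_mem_of_mem_comap hy)) x⁻¹
    calc g * (x * y) * g⁻¹ * (x * y)⁻¹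
        = g * x * g⁻¹ * (g * y * g⁻¹ * y⁻¹ * x⁻¹) := by group
      _ = g * x * g⁻¹ * x⁻¹ * (g * y * g⁻¹ * y⁻¹) := by rw [← hc]; group

lemma ker_commutatorHom (g : G) :
    (commutatorHom hN g).ker =
      (centralizer {g}).subgroupOf ((centralizer {(g : G ⧸ N)}).comap (mk' N)) := by
  ext ⟨x, hx⟩
  rw [MonoidHom.mem_ker, mem_subgroupOf, mem_centralizer_singleton_iff, Subtype.ext_iff]
  change g * x * g⁻¹ * x⁻¹ = 1 ↔ _
  rw [← commutatorElement_def, commutatorElement_eq_one_iff_mul_comm, eq_comm]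

lemma relIndex_centralizer_dvd_card (g : G) :
    (centralizer {g}).relIndex ((centralizer {(g : G ⧸ N)}).comap (mk' N)) ∣ Nat.card N := by
  rw [relIndex, ← ker_commutatorHom hN, index_ker]
  exact card_subgroup_dvd_card _

lemma commute_of_commute_mk {g h : G} (hgh : Commute (g : G ⧸ N) h)
    (hcop : (Nat.card N).Coprime (orderOf h)) : Commute g h := by
  let h' : (centralizer {(g : G ⧸ N)}).comap (mk' N) :=
    ⟨h, mem_comap.mpr (mem_centralizer_singleton_iff.mpr hgh.eq.symm)⟩
  have hord : orderOf (commutatorHom hN g h') = 1 :=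
    Nat.eq_one_of_dvd_coprimes hcop (orderOf_dvd_natCard _)
      ((orderOf_map_dvd _ _).trans (orderOf_coe h').symm.dvd)
  have hker : h' ∈ (commutatorHom hN g).ker := orderOf_eq_one_iff.mp hord
  rw [ker_commutatorHom, mem_subgroupOf, mem_centralizer_singleton_iff] at hker
  exact hker.symm

lemma exists_index_centralizer_eq_pow_iff [Finite G] {q : ℕ} [Fact q.Prime]
    (hNq : IsPGroup q N) (g : G) :
    (∃ k, (centralizer {g}).index = q ^ k) ↔
      ∃ k, (centralizer {(g : G ⧸ N)}).index = q ^ k := by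
  obtain ⟨a, ha⟩ := IsPGroup.iff_card.mp hNq
  obtain ⟨b, -, hb⟩ :=
    (Nat.dvd_prime_pow Fact.out).mp (ha ▸ relIndex_centralizer_dvd_card hN g)
  rw [index_centralizer_eq_relIndex_mul (N := N), hb]
  constructor
  · rintro ⟨k, hk⟩
    obtain ⟨j, -, hj⟩ := (Nat.dvd_prime_pow Fact.out).mp (Dvd.intro_left _ hk)
    exact ⟨j, hj⟩
  · rintro ⟨k, hk⟩
    exact ⟨b + k, by rw [hk, pow_add]⟩

end CentralQuotient

lemma index_centralizer_eq_index_stabilizer (g : G) :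
    (centralizer {g}).index = (MulAction.stabilizer (ConjAct G) g).index := by
  rw [centralizer_eq_comap_stabilizer]
  exact index_comap_of_surjective _ ConjAct.toConjAct.surjective

lemma Sylow.eq_top_of_le_of_index_eq_pow [Finite G] {q : ℕ} [Fact q.Prime] (Q : Sylow q G)
    {K : Subgroup G} (hQK : (Q : Subgroup G) ≤ K) {k : ℕ} (hK : K.index = q ^ k) : K = ⊤ := by
  rw [← index_eq_one, hK]
  rcases k with _ | k
  · rfl
  · exact absurd ((dvd_pow_self q k.succ_ne_zero).trans (hK ▸ index_dvd_of_le hQK))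
      Q.not_dvd_index

-- `S_q(G_π)`
variable (π : Set ℕ) (q : ℕ) (G) in
def powClassPiElements : SubMulAction (ConjAct G) G where
  carrier := {g | IsPiElement π g ∧ ∃ k, (centralizer {g}).index = q ^ k}
  smul_mem' c g := by
    rintro ⟨hg, k, hk⟩
    refine ⟨hg.of_orderOf_dvd ?_, k, ?_⟩
    · rw [ConjAct.smul_eq_mulAut_conj, MulEquiv.orderOf_eq]
    · rwa [index_centralizer_eq_index_stabilizer, MulAction.index_stabilizer, MulAction.orbit_smul,
        ← MulAction.index_stabilizer, ← index_centralizer_eq_index_stabilizer]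

lemma mem_powClassPiElements_of_mem_center {π : Set ℕ} {q : ℕ} {z : G} (hz : z ∈ center G)
    (hzπ : IsPiElement π z) : z ∈ powClassPiElements G π q :=
  ⟨hzπ, 0, by rw [pow_zero, index_eq_one, centralizer_eq_top_iff_subset]; simpa⟩

instance {π : Set ℕ} {q : ℕ} : Nonempty (powClassPiElements G π q) :=
  ⟨⟨1, mem_powClassPiElements_of_mem_center (one_mem _) isPiElement_one⟩⟩

section Counting

variable {π : Set ℕ} {q : ℕ} [Fact q.Prime] [Finite G]

instance : Finite (ConjAct G) := ‹Finite G›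

lemma mem_fixedPoints_powClassPiElements_iff (Q : Sylow q (ConjAct G))
    (x : powClassPiElements G π q) :
    x ∈ MulAction.fixedPoints Q (powClassPiElements G π q) ↔ (x : G) ∈ center G := by
  rw [← SetLike.mem_coe, ← ConjAct.fixedPoints_eq_center]
  constructor
  · intro hx
    obtain ⟨k, hk⟩ := x.2.2
    have hQ : (Q : Subgroup (ConjAct G)) ≤ MulAction.stabilizer (ConjAct G) (x : G) :=
      fun u hu => congrArg Subtype.val (hx ⟨u, hu⟩)
    rw [index_centralizer_eq_index_stabilizer] at hk
    intro u
    exact (Q.eq_top_of_le_of_index_eq_pow hQ hk ▸ mem_top u : u ∈ MulAction.stabilizer _ _)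
  · exact fun hx u => Subtype.ext (hx u)

lemma card_powClassPiElements_modEq :
    Nat.card (powClassPiElements G π q) ≡ Nat.card (centralPiSubgroup G π) [MOD q] := by
  obtain ⟨Q⟩ : Nonempty (Sylow q (ConjAct G)) := inferInstance
  have hfix : MulAction.fixedPoints Q (powClassPiElements G π q) =
      Subtype.val ⁻¹' (centralPiSubgroup G π : Set G) := by
    ext x
    exact (mem_fixedPoints_powClassPiElements_iff Q x).trans (and_iff_left x.2.1).symm
  have hrange : (centralPiSubgroup G π : Set G) ⊆
      Set.range (Subtype.val : powClassPiElements G π q → G) := by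
    rintro z ⟨hz, hzπ⟩
    exact ⟨⟨z, mem_powClassPiElements_of_mem_center hz hzπ⟩, rfl⟩
  have hcard := Nat.card_preimage_of_injective Subtype.val_injective hrange
  rw [← hfix, SetLike.coe_sort_coe] at hcard
  rw [← hcard]
  exact Q.isPGroup'.card_modEq_card_fixedPoints _

end Counting

lemma not_dvd_card_powClassPiElements {π : Set ℕ} {q : ℕ} [Fact q.Prime] [Finite G]
    (hqZ : ¬ q ∣ Nat.card (center G)) : ¬ q ∣ Nat.card (powClassPiElements G π q) := fun h =>
  hqZ <| (Nat.modEq_zero_iff_dvd.mp (card_powClassPiElements_modEq.symm.trans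
    (Nat.modEq_zero_iff_dvd.mpr h))).trans (card_dvd_of_le fun _ hz => hz.1)

lemma card_powClassPiElements_eq_card_mul {π : Set ℕ} {q : ℕ} [Fact q.Prime] [Finite G]
    (hqπ : q ∈ π) {N : Subgroup G} [N.Normal] (hN : N ≤ center G) (hNq : IsPGroup q N) :
    Nat.card (powClassPiElements G π q) =
      Nat.card N * Nat.card (powClassPiElements (G ⧸ N) π q) := by
  have hpre : (powClassPiElements G π q : Set G) =
      QuotientGroup.mk ⁻¹' (powClassPiElements (G ⧸ N) π q : Set (G ⧸ N)) := by
    ext g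
    exact and_congr (isPiElement_mk_iff hqπ hNq).symm
      (exists_index_centralizer_eq_pow_iff hN hNq g)
  rw [← SetLike.coe_sort_coe, hpre, card_preimage_mk]
  rfl

variable (G) in
def hypercenter : Subgroup G := ⨆ n, Subgroup.upperCentralSeries G n

lemma mem_hypercenter_iff {x : G} :
    x ∈ hypercenter G ↔ ∃ n, x ∈ Subgroup.upperCentralSeries G n :=
  mem_iSup_of_directed (Subgroup.upperCentralSeries_mono G).directed_le

lemma hypercenter_eq_bot_of_center_eq_bot (h : center G = ⊥) : hypercenter G = ⊥ := by
  have h01 : Subgroup.upperCentralSeries G 0 = Subgroup.upperCentralSeries G (0 + 1) := by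
    rw [zero_add, Subgroup.upperCentralSeries_one, h, Subgroup.upperCentralSeries_zero]
  refine iSup_eq_bot.mpr fun n => ?_
  rw [← Subgroup.upperCentralSeries.eq_ge_of_eq_succ n.zero_le h01,
    Subgroup.upperCentralSeries_zero]

lemma comap_mk_hypercenter {N : Subgroup G} [N.Normal] (hN : N ≤ center G) :
    (hypercenter (G ⧸ N)).comap (mk' N) = hypercenter G := by
  let φ : G ⧸ N →* G ⧸ center G := QuotientGroup.map N (center G) (MonoidHom.id G) hN
  have hφ : Function.Surjective φ :=
    map_surjective_of_surjective _ _ _ (mk_surjective (s := center G)) hN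
  ext x
  simp only [mem_comap, mem_hypercenter_iff]
  constructor
  · rintro ⟨n, hn⟩
    refine ⟨n + 1, ?_⟩
    rw [← Subgroup.comap_upperCentralSeries_quotient_center]
    exact Subgroup.upperCentralSeries.map hφ n (mem_map_of_mem φ hn)
  · rintro ⟨n, hn⟩
    exact ⟨n, Subgroup.upperCentralSeries.map (mk'_surjective N) n (mem_map_of_mem _ hn)⟩

lemma card_hypercenter_eq_card_mul {N : Subgroup G} [N.Normal] (hN : N ≤ center G) :
    Nat.card (hypercenter G) = Nat.card N * Nat.card (hypercenter (G ⧸ N)) := by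
  rw [← comap_mk_hypercenter hN, ← SetLike.coe_sort_coe, coe_comap, coe_mk', card_preimage_mk]
  rfl

lemma card_quotient_lt_card [Finite G] {N : Subgroup G} [N.Normal] (hN : N ≠ ⊥) :
    Nat.card (G ⧸ N) < Nat.card G := by
  rw [card_eq_card_quotient_mul_card_subgroup N]
  exact lt_mul_of_one_lt_right Nat.card_pos ((one_lt_card_iff_ne_bot N).mpr hN)

lemma dvd_card_center_of_dvd_card_center_quotient [Finite G] {q : ℕ} [Fact q.Prime]
    {N : Subgroup G} [N.Normal] (hN : N ≤ center G) (hqN : ¬ q ∣ Nat.card N)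
    (h : q ∣ Nat.card (center (G ⧸ N))) : q ∣ Nat.card (center G) := by
  obtain ⟨x, hx⟩ := exists_prime_orderOf_dvd_card' q h
  rw [← Subgroup.orderOf_coe] at hx
  obtain ⟨g, hg⟩ := mk_surjective (x : G ⧸ N)
  have hcop : q.Coprime (Nat.card N) := (Nat.Prime.coprime_iff_not_dvd Fact.out).mpr hqN
  set y := g ^ Nat.card N
  have hmk : (y : G ⧸ N) = (x : G ⧸ N) ^ Nat.card N := by rw [QuotientGroup.mk_pow, hg]
  have hgq : g ^ q ∈ N := by
    rw [← QuotientGroup.eq_one_iff, QuotientGroup.mk_pow, hg, ← hx, pow_orderOf_eq_one]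
  have hyq : orderOf y ∣ q := by
    apply orderOf_dvd_of_pow_eq_one
    rw [← pow_mul, mul_comm, pow_mul]
    exact orderOf_dvd_iff_pow_eq_one.mp
      (orderOf_mk _ hgq ▸ orderOf_dvd_natCard (⟨g ^ q, hgq⟩ : N))
  have hy : y ∈ center G := mem_center_iff.mpr fun h =>
    (commute_of_commute_mk hN (by rw [hmk]; exact mem_center_iff.mp (pow_mem x.2 _) h)
      (hcop.symm.coprime_dvd_right hyq)).eq
  calc q = orderOf (y : G ⧸ N) := by rw [hmk, Nat.Coprime.orderOf_pow (by rwa [hx]), hx]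
    _ ∣ orderOf y := orderOf_map_dvd (mk' N) y
    _ ∣ Nat.card (center G) := orderOf_mk y hy ▸ orderOf_dvd_natCard _

theorem dvd_card_center_of_dvd_card_hypercenter [Finite G] {q : ℕ} (hq : q.Prime)
    (h : q ∣ Nat.card (hypercenter G)) : q ∣ Nat.card (center G) := by
  induction hn : Nat.card G using Nat.strong_induction_on generalizing G with
  | _ n ih =>
  have : Fact q.Prime := ⟨hq⟩
  by_contra hqZ
  have hZ : center G ≠ ⊥ := by
    rintro hZ
    rw [hypercenter_eq_bot_of_center_eq_bot hZ, card_bot] at h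
    exact hq.ne_one (Nat.dvd_one.mp h)
  rw [card_hypercenter_eq_card_mul le_rfl, hq.dvd_mul, or_iff_right hqZ] at h
  exact hqZ <| dvd_card_center_of_dvd_card_center_quotient le_rfl hqZ <|
    ih _ (hn ▸ card_quotient_lt_card hZ) h rfl

lemma exists_le_center_card_eq [Finite G] {q : ℕ} [Fact q.Prime] (h : q ∣ Nat.card (center G)) :
    ∃ N : Subgroup G, N ≤ center G ∧ Nat.card N = q := by
  obtain ⟨z, hz⟩ := exists_prime_orderOf_dvd_card' q h
  exact ⟨zpowers (z : G), zpowers_le.mpr z.2, by rw [Nat.card_zpowers, orderOf_coe, hz]⟩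

end

/-- The q-part of `|S_q(G_π)|` equals the q-part of the order of the hypercentre of `G`,
for any prime `q ∈ π`. -/
theorem stmt8 {G : Type*} [Group G] [Finite G] (π : Set ℕ) (q : ℕ)
    (hq : q.Prime) (hqπ : q ∈ π) :
    (Nat.card {g : G // IsPiElement π g ∧
        ∃ k : ℕ, (Subgroup.centralizer {g}).index = q ^ k}).factorization q
      = (Nat.card (⨆ n : ℕ, upperCentralSeries G n : Subgroup G)).factorization q := by
  change (Nat.card (powClassPiElements G π q)).factorization q =
    (Nat.card (hypercenter G)).factorization q
  have : Fact q.Prime := ⟨hq⟩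
  induction hn : Nat.card G using Nat.strong_induction_on generalizing G with
  | _ n ih =>
  by_cases hqZ : q ∣ Nat.card (Subgroup.center G)
  · obtain ⟨N, hN, hNcard⟩ := exists_le_center_card_eq hqZ
    have := normal_of_le_center hN
    have hNq : IsPGroup q N := .of_card (n := 1) (by rw [hNcard, pow_one])
    have hlt : Nat.card (G ⧸ N) < n :=
      hn ▸ card_quotient_lt_card ((Subgroup.one_lt_card_iff_ne_bot N).mp (hNcard ▸ hq.one_lt))
    rw [card_powClassPiElements_eq_card_mul hqπ hN hNq, card_hypercenter_eq_card_mul hN, hNcard,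
      Nat.factorization_mul hq.ne_zero Nat.card_pos.ne',
      Nat.factorization_mul hq.ne_zero Nat.card_pos.ne', Finsupp.add_apply, Finsupp.add_apply,
      ih _ hlt rfl]
  · rw [Nat.factorization_eq_zero_of_not_dvd (not_dvd_card_powClassPiElements hqZ),
      Nat.factorization_eq_zero_of_not_dvd (mt (dvd_card_center_of_dvd_card_hypercenter hq) hqZ)]
end

section
/- Let G be a finite group, π a set of primes, and q ∈ π. If the q-part of |S_{q'}(G_π)| equals |Z(G)|_q, then Z(Q) ≤ Z(G) for Q a Sylow q-subgroup of G. -/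
open Subgroup Finset
open scoped Pointwise

section

variable {G : Type*} [Group G]

namespace IsPiElement

variable {π : Set ℕ}

theorem one : IsPiElement π (1 : G) := fun p hp hdvd => by
  rw [orderOf_one, Nat.dvd_one] at hdvd
  exact absurd hdvd hp.ne_one

theorem mul_of_commute_s16 {g h : G} (hg : IsPiElement π g) (hh : IsPiElement π h)
    (hgh : Commute g h) : IsPiElement π (g * h) := fun p hp hdvd =>
  (hp.dvd_mul.mp (hdvd.trans (hgh.orderOf_mul_dvd_lcm.trans (Nat.lcm_dvd_mul _ _)))).elim
    (hg p hp) (hh p hp)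

theorem of_mem_of_isPGroup {q : ℕ} [Fact q.Prime] (hq : q ∈ π) {H : Subgroup G}
    (hH : IsPGroup q H) {g : G} (hg : g ∈ H) : IsPiElement π g := by
  obtain ⟨k, hk⟩ := IsPGroup.iff_orderOf.mp hH ⟨g, hg⟩
  intro p hp hdvd
  rw [← Subgroup.orderOf_mk g hg, hk] at hdvd
  rwa [(Nat.prime_dvd_prime_iff_eq hp Fact.out).mp (hp.dvd_of_dvd_pow hdvd)]

end IsPiElement

namespace Subgroup

theorem centralizer_singleton_mul_of_mem_center {g z : G} (hz : z ∈ center G) :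
    centralizer {g * z} = centralizer {g} := by
  ext u
  simp only [mem_centralizer_singleton_iff, mul_assoc, (mem_center_iff.mp hz u).symm]
  rw [← mul_assoc, ← mul_assoc, mul_left_inj]

theorem conj_mem_centralizer_smul {H : Subgroup G} {x : G} (hx : x ∈ centralizer H) (c : G) :
    c * x * c⁻¹ ∈ centralizer (MulAut.conj c • H : Subgroup G) := by
  rw [mem_centralizer_iff]
  intro y hy
  rw [SetLike.mem_coe, mem_pointwise_smul_iff_inv_smul_mem] at hy
  have hcomm := mem_centralizer_iff.mp hx _ hy
  simp only [MulAut.smul_def, MulAut.conj_inv_apply] at hcomm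
  simpa [mul_assoc] using congrArg (fun w => c * w * c⁻¹) hcomm

theorem conj_notMem_center {x : G} (hx : x ∉ center G) (c : G) : c * x * c⁻¹ ∉ center G :=
  fun h => hx (by simpa [mul_assoc] using (inferInstance : (center G).Normal).conj_mem _ h c⁻¹)

theorem card_mul_dvd_sum_of_mul_right_invariant {R : Type*} [CommSemiring R] [Fintype G]
    (M : Subgroup G) {f : G → R} {d : R} (hf : ∀ g, ∀ m ∈ M, f (g * m) = f g)
    (hd : ∀ g, d ∣ f g) : (Nat.card M : R) * d ∣ ∑ g, f g := by
  classical
  rw [← sum_fiberwise univ (QuotientGroup.mk (s := M)) f]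
  refine dvd_sum fun c _ => ?_
  have hfiber : ∀ g ∈ univ.filter (fun g : G => (g : G ⧸ M) = c), f g = f c.out := by
    intro g hg
    rw [mem_filter, ← QuotientGroup.out_eq' c, QuotientGroup.eq] at hg
    simpa using (hf g _ hg.2).symm
  have hcard : #(univ.filter fun g : G => (g : G ⧸ M) = c) = Nat.card M := by
    simpa [Nat.card_eq_card_toFinset] using QuotientGroup.card_preimage_mk M {c}
  rw [sum_congr rfl hfiber, sum_const, nsmul_eq_mul, hcard]
  exact mul_dvd_mul_left _ (hd _)

theorem card_mul_dvd_finset_sum_of_mul_right_invariant {R : Type*} [CommSemiring R]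
    [Fintype G] (M : Subgroup G) {A : Finset G} (hA : ∀ g ∈ A, ∀ m ∈ M, g * m ∈ A)
    {f : G → R} {d : R} (hf : ∀ g ∈ A, ∀ m ∈ M, f (g * m) = f g) (hd : ∀ g ∈ A, d ∣ f g) :
    (Nat.card M : R) * d ∣ ∑ g ∈ A, f g := by
  classical
  have hmem : ∀ g, ∀ m ∈ M, g * m ∈ A ↔ g ∈ A := fun g m hm =>
    ⟨fun h => by simpa using hA _ h _ (M.inv_mem hm), fun h => hA g h m hm⟩
  rw [← univ_inter A, ← sum_ite_mem]
  refine card_mul_dvd_sum_of_mul_right_invariant M (fun g m hm => ?_) (fun g => ?_)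
  · simp only [hmem g m hm]
    split_ifs with hg
    exacts [hf g hg m hm, rfl]
  · split_ifs with hg
    exacts [hd g hg, dvd_zero d]

end Subgroup

theorem IsPGroup.pow_succ_dvd_card_of_lt [Finite G] {q : ℕ} [Fact q.Prime] {H K : Subgroup G}
    (hK : IsPGroup q K) (hHK : H < K) {a : ℕ} (hH : Nat.card H = q ^ a) :
    q ^ (a + 1) ∣ Nat.card K := by
  obtain ⟨k, hk⟩ := IsPGroup.iff_card.mp hK
  have hdvd := card_dvd_of_le hHK.le
  rw [hH, hk, Nat.pow_dvd_pow_iff_le_right (Fact.out : q.Prime).one_lt] at hdvd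
  have hne : a ≠ k := fun hak => hHK.ne (eq_of_le_of_card_ge hHK.le (by rw [hH, hk, hak]))
  rw [hk]
  exact pow_dvd_pow q (lt_of_le_of_ne hdvd hne)

theorem exists_isPGroup_le_center_card_eq [Finite G] (q : ℕ) [Fact q.Prime] :
    ∃ N : Subgroup G, N ≤ center G ∧ IsPGroup q N ∧
      Nat.card N = q ^ (Nat.card (center G)).factorization q := by
  obtain ⟨R⟩ : Nonempty (Sylow q (center G)) := inferInstance
  exact ⟨R.1.map (center G).subtype, map_subtype_le _, R.2.map _,
    (card_map_of_injective (center G).subtype_injective).trans R.card_eq_multiplicity⟩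

namespace Sylow

variable [Finite G] {q : ℕ} [Fact q.Prime] {H : Subgroup G}

def equivSubtypeLeOfNotDvdIndex (hH : ¬ q ∣ H.index) :
    Sylow q H ≃ {P : Sylow q G // P ≤ H} where
  toFun R := ⟨(R.isPGroup'.map H.subtype).toSylow (by
      rw [index_map_subtype]
      exact (Nat.Prime.dvd_mul Fact.out).not.mpr (not_or.mpr ⟨R.not_dvd_index, hH⟩)),
    map_subtype_le _⟩
  invFun P := P.1.subtype P.2
  left_inv R := Sylow.ext (comap_map_eq_self_of_injective H.subtype_injective _)
  right_inv P := Subtype.ext (Sylow.ext (map_subgroupOf_eq_of_le P.2))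

theorem card_subtype_le_modEq_one (hH : ¬ q ∣ H.index) :
    Nat.card {P : Sylow q G // P ≤ H} ≡ 1 [MOD q] :=
  Nat.card_congr (equivSubtypeLeOfNotDvdIndex hH) ▸ card_sylow_modEq_one q H

end Sylow

section Counting

open scoped Classical

variable [Fintype G] (π : Set ℕ) (q : ℕ)

/-- `S_{q'}(G_π)`; the conjugacy class of `g` has size `|G : C_G(g)|`. -/
noncomputable def qPrimeClassPiElements : Finset G :=
  {g | IsPiElement π g ∧ ¬ q ∣ (centralizer {g}).index}

noncomputable def piCentralizing (H : Subgroup G) : Finset G :=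
  {g | IsPiElement π g ∧ H ≤ centralizer {g}}

variable {π q}

theorem card_qPrimeClassPiElements : #(qPrimeClassPiElements (G := G) π q) =
    Nat.card {g : G // IsPiElement π g ∧ ¬ q ∣ (centralizer {g}).index} := by
  rw [Nat.card_eq_fintype_card, Fintype.card_subtype, qPrimeClassPiElements]

variable [Fact q.Prime]

theorem card_qPrimeClassPiElements_pos : 0 < #(qPrimeClassPiElements (G := G) π q) :=
  card_pos.mpr ⟨1, by
    simp [qPrimeClassPiElements, IsPiElement.one, centralizer_eq_top_iff_subset.mpr,
      (Fact.out : q.Prime).ne_one]⟩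

theorem pow_succ_dvd_card_piCentralizing (hqπ : q ∈ π) {P : Subgroup G} (hP : IsPGroup q P)
    {x : G} (hxP : x ∈ P) (hxc : x ∈ centralizer P) (hxZ : x ∉ center G) :
    q ^ ((Nat.card (center G)).factorization q + 1) ∣ #(piCentralizing π P) := by
  obtain ⟨N, hNZ, hN, hNcard⟩ := exists_isPGroup_le_center_card_eq (G := G) q
  set M := N ⊔ zpowers x
  have hM : IsPGroup q M := hN.to_sup_of_normal_right' (hP.to_le (zpowers_le.mpr hxP))
    (hNZ.trans (center_le_normalizer _))
  have hNM : N < M := lt_of_le_of_ne le_sup_left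
    fun h => hxZ (hNZ (h ▸ mem_sup_right (mem_zpowers x)))
  have hMP : M ≤ centralizer P :=
    sup_le (hNZ.trans (center_le_centralizer _)) (zpowers_le.mpr hxc)
  have hstable : ∀ g ∈ piCentralizing π P, ∀ m ∈ M, g * m ∈ piCentralizing π P := by
    intro g hg m hm
    simp only [piCentralizing, mem_filter, mem_univ, true_and] at hg ⊢
    have hMg : M ≤ centralizer {g} :=
      sup_le (hNZ.trans (center_le_centralizer _)) (zpowers_le.mpr (hg.2 hxP))
    refine ⟨hg.1.mul_of_commute_s16 (.of_mem_of_isPGroup hqπ hM hm)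
      (mem_centralizer_singleton_iff.mp (hMg hm)).symm, fun y hy => ?_⟩
    exact mem_centralizer_singleton_iff.mpr (Commute.mul_right
      (mem_centralizer_singleton_iff.mp (hg.2 hy)) (mem_centralizer_iff.mp (hMP hm) y hy))
  have hdvd := card_mul_dvd_finset_sum_of_mul_right_invariant M hstable
    (f := fun _ => (1 : ℕ)) (d := 1) (fun _ _ _ _ => rfl) (fun _ _ => one_dvd 1)
  rw [mul_one, ← card_eq_sum_ones] at hdvd
  exact (hM.pow_succ_dvd_card_of_lt hNM hNcard).trans hdvd

variable [Fintype (Sylow q G)]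

theorem sum_card_sylow_le_centralizer_eq_sum_card_piCentralizing :
    ∑ g ∈ qPrimeClassPiElements π q, #{P : Sylow q G | (P : Subgroup G) ≤ centralizer {g}} =
      ∑ P : Sylow q G, #(piCentralizing π (P : Subgroup G)) := by
  refine (sum_card_bipartiteAbove_eq_sum_card_bipartiteBelow
    (r := fun g (P : Sylow q G) => (P : Subgroup G) ≤ centralizer {g})).trans ?_
  refine sum_congr rfl fun P _ => congrArg card (Finset.ext fun g => ?_)
  simp only [bipartiteBelow, qPrimeClassPiElements, piCentralizing, mem_filter, mem_univ,
    true_and]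
  exact ⟨fun ⟨⟨hg, _⟩, hP⟩ => ⟨hg, hP⟩,
    fun ⟨hg, hP⟩ => ⟨⟨hg, fun h => P.not_dvd_index (h.trans (index_dvd_of_le hP))⟩, hP⟩⟩

theorem pow_succ_dvd_sum_card_sylow_le_centralizer_sub_one (hqπ : q ∈ π) :
    (q : ℤ) ^ ((Nat.card (center G)).factorization q + 1) ∣ ∑ g ∈ qPrimeClassPiElements π q,
      ((#{P : Sylow q G | (P : Subgroup G) ≤ centralizer {g}} : ℤ) - 1) := by
  obtain ⟨N, hNZ, hN, hNcard⟩ := exists_isPGroup_le_center_card_eq (G := G) q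
  have hcent : ∀ g, ∀ n ∈ N, centralizer {g * n} = centralizer {g} :=
    fun g n hn => centralizer_singleton_mul_of_mem_center (hNZ hn)
  have hstable :
      ∀ g ∈ qPrimeClassPiElements π q, ∀ n ∈ N, g * n ∈ qPrimeClassPiElements π q := by
    intro g hg n hn
    simp only [qPrimeClassPiElements, mem_filter, mem_univ, true_and, hcent g n hn] at hg ⊢
    exact ⟨hg.1.mul_of_commute_s16 (.of_mem_of_isPGroup hqπ hN hn) (mem_center_iff.mp (hNZ hn) g),
      hg.2⟩
  have hdvd := card_mul_dvd_finset_sum_of_mul_right_invariant N hstable (d := (q : ℤ))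
    (f := fun g => (#{P : Sylow q G | (P : Subgroup G) ≤ centralizer {g}} : ℤ) - 1)
    (fun g _ n hn => by simp only [hcent g n hn]) fun g hg => by
      simp only [qPrimeClassPiElements, mem_filter, mem_univ, true_and] at hg
      have hmod := Sylow.card_subtype_le_modEq_one hg.2
      rw [Nat.card_eq_fintype_card, Fintype.card_subtype] at hmod
      exact_mod_cast Nat.modEq_iff_dvd.mp hmod.symm
  rwa [hNcard, Nat.cast_pow, ← pow_succ] at hdvd

theorem pow_succ_dvd_card_qPrimeClassPiElements (hqπ : q ∈ π)
    (hT : ∀ P : Sylow q G, q ^ ((Nat.card (center G)).factorization q + 1) ∣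
      #(piCentralizing π (P : Subgroup G))) :
    q ^ ((Nat.card (center G)).factorization q + 1) ∣ #(qPrimeClassPiElements (G := G) π q) := by
  have hsum := dvd_sum (s := univ) fun P _ => hT P
  rw [← sum_card_sylow_le_centralizer_eq_sum_card_piCentralizing] at hsum
  have hdvd := dvd_sub (Int.natCast_dvd_natCast.mpr hsum)
    (pow_succ_dvd_sum_card_sylow_le_centralizer_sub_one hqπ)
  push_cast at hdvd
  simp only [← sum_sub_distrib, sub_sub_cancel, sum_const, nsmul_eq_mul, mul_one] at hdvd
  exact_mod_cast hdvd

end Counting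

end

/-- If the q-part of `|S_{q'}(G_π)|` equals `|Z(G)|_q`, then `Z(Q) ≤ Z(G)` for a Sylow
q-subgroup `Q` of `G`. -/
theorem stmt16 {G : Type*} [Group G] [Finite G] (π : Set ℕ) (q : ℕ)
    [Fact q.Prime] (hqπ : q ∈ π) (Q : Sylow q G)
    (h : (Nat.card {g : G // IsPiElement π g ∧
            ¬ q ∣ (Subgroup.centralizer {g}).index}).factorization q
          = (Nat.card (Subgroup.center G)).factorization q) :
    ∀ x ∈ (Q : Subgroup G), (∀ y ∈ (Q : Subgroup G), x * y = y * x) →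
      x ∈ Subgroup.center G := by
  intro x hxQ hxc
  by_contra hxZ
  have := Fintype.ofFinite G
  have := Fintype.ofFinite (Sylow q G)
  set a := (Nat.card (center G)).factorization q
  have hxc : x ∈ centralizer Q := mem_centralizer_iff.mpr fun y hy => (hxc y hy).symm
  have hT (P : Sylow q G) : q ^ (a + 1) ∣ #(piCentralizing π (P : Subgroup G)) := by
    obtain ⟨c, rfl⟩ := MulAction.exists_smul_eq G Q P
    rw [Sylow.coe_subgroup_smul]
    exact pow_succ_dvd_card_piCentralizing hqπ (c • Q).isPGroup'
      (smul_mem_pointwise_smul x (MulAut.conj c) Q hxQ) (conj_mem_centralizer_smul hxc c)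
      (conj_notMem_center hxZ c)
  have hS := pow_succ_dvd_card_qPrimeClassPiElements hqπ hT
  have hle := ((Fact.out : q.Prime).pow_dvd_iff_le_factorization
    card_qPrimeClassPiElements_pos.ne').mp hS
  rw [card_qPrimeClassPiElements, h] at hle
  omega
end
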